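/- Let x₁ ≤ x₂ ≤ … ≤ xₙ be n real numbers. Then an optimal 2-clustering of the points, i.e. a partition into two nonempty sets minimizing the total within-cluster sum of squared deviations from cluster means, is achieved by some contiguous partition {x₁,…,x_j}, {x_{j+1},…,xₙ} of the sorted sequence. -/
import Mathlib

open Finset

/-- Sum over a finset splits into sdiff and inter parts. -/
private lemma sum_split {α : Type*} [DecidableEq α] (s t : Finset α) (f : α → ℝ) :
    ∑ i ∈ s, f i = (∑ i ∈ s \ t, f i) + (∑ i ∈ s ∩ t, f i) := by
  rw [← Finset.sum_union (Finset.disjoint_sdiff_inter _ _), Finset.sdiff_union_inter]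

/-- Key exchange lemma: among sets of a fixed cardinality, the prefix `Iic j`
has the least sum of the monotone `x`. -/
private lemma prefix_min {n : ℕ} (x : Fin n → ℝ) (hx : Monotone x) (j : Fin n)
    (B : Finset (Fin n)) (hB : B.card = (Finset.Iic j).card) :
    ∑ i ∈ Finset.Iic j, x i ≤ ∑ i ∈ B, x i := by
  classical
  set P := Finset.Iic j with hP
  have hcard : (P \ B).card = (B \ P).card := by
    have h1 : (P \ B).card + (P ∩ B).card = P.card := by
      rw [← Finset.card_union_of_disjoint (Finset.disjoint_sdiff_inter _ _),
        Finset.sdiff_union_inter]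
    have h2 : (B \ P).card + (B ∩ P).card = B.card := by
      rw [← Finset.card_union_of_disjoint (Finset.disjoint_sdiff_inter _ _),
        Finset.sdiff_union_inter]
    rw [Finset.inter_comm] at h2
    omega
  have hub : ∑ i ∈ P \ B, x i ≤ (P \ B).card • x j := by
    apply Finset.sum_le_card_nsmul
    intro i hi
    have : i ∈ P := (Finset.mem_sdiff.mp hi).1
    exact hx (Finset.mem_Iic.mp this)
  have hlb : (B \ P).card • x j ≤ ∑ i ∈ B \ P, x i := by
    apply Finset.card_nsmul_le_sum
    intro i hi
    have : i ∉ P := (Finset.mem_sdiff.mp hi).2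
    exact hx (le_of_lt (by simpa [hP, Finset.mem_Iic, not_le] using this))
  have e1 := sum_split P B x
  have e2 := sum_split B P x
  have : (∑ i ∈ P ∩ B, x i) = ∑ i ∈ B ∩ P, x i := by rw [Finset.inter_comm]
  rw [hcard] at hub
  simp only [nsmul_eq_mul] at hub hlb
  linarith

/-- Within-cluster sum of squares in terms of sum and sum of squares. -/
private lemma wcss {n : ℕ} (x : Fin n → ℝ) (A : Finset (Fin n)) (hA : A.Nonempty) :
    ∑ i ∈ A, (x i - (∑ i ∈ A, x i) / A.card)^2
      = ∑ i ∈ A, (x i)^2 - (∑ i ∈ A, x i)^2 / A.card := by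
  have hc : (A.card : ℝ) ≠ 0 := by
    exact_mod_cast Finset.card_ne_zero_of_mem hA.choose_spec
  set S := ∑ i ∈ A, x i with hS
  have : ∀ i ∈ A, (x i - S / A.card)^2
      = (x i)^2 - (2 * (S / A.card)) * x i + (S / A.card)^2 := by
    intro i _; ring
  rw [Finset.sum_congr rfl this]
  rw [Finset.sum_add_distrib, Finset.sum_sub_distrib, ← Finset.mul_sum, ← hS,
    Finset.sum_const, nsmul_eq_mul]
  field_simp
  ring

/-- Convexity: a quadratic of this shape on `[a,b]` is maximized at an endpoint. -/
private lemma quad_max (p q T a b s : ℝ) (hp : 0 < p) (hq : 0 < q)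
    (has : a ≤ s) (hsb : s ≤ b) :
    s^2/p + (T-s)^2/q ≤ max (a^2/p + (T-a)^2/q) (b^2/p + (T-b)^2/q) := by
  obtain ⟨c, hc⟩ : ∃ c : ℝ, c = 1/p + 1/q := ⟨_, rfl⟩
  obtain ⟨d, hd⟩ : ∃ d : ℝ, d = 2*T/q := ⟨_, rfl⟩
  have hida : s^2/p + (T-s)^2/q - (a^2/p + (T-a)^2/q) = (s-a)*(c*(s+a) - d) := by
    rw [hc, hd]; field_simp; ring
  have hidb : s^2/p + (T-s)^2/q - (b^2/p + (T-b)^2/q) = (s-b)*(c*(s+b) - d) := by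
    rw [hc, hd]; field_simp; ring
  have hcpos : 0 < c := by rw [hc]; positivity
  rcases le_or_gt (c*(s+a)) d with h | h
  · apply le_max_of_le_left
    have key : (s-a)*(c*(s+a) - d) ≤ 0 :=
      mul_nonpos_of_nonneg_of_nonpos (sub_nonneg.mpr has) (by linarith)
    linarith [hida, key]
  · apply le_max_of_le_right
    have hsab : c*(s+a) ≤ c*(s+b) :=
      mul_le_mul_of_nonneg_left (by linarith) hcpos.le
    have key : (s-b)*(c*(s+b) - d) ≤ 0 :=
      mul_nonpos_of_nonpos_of_nonneg (by linarith) (by linarith)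
    linarith [hidb, key]

theorem stmt10 (n : ℕ) (hn : 2 ≤ n) (x : Fin n → ℝ) (hsorted : Monotone x) :
    let mean : Finset (Fin n) → ℝ := fun A => (∑ i ∈ A, x i) / A.card
    let cost : Finset (Fin n) → ℝ := fun A =>
      (∑ i ∈ A, (x i - mean A)^2) + (∑ i ∈ Aᶜ, (x i - mean Aᶜ)^2)
    ∃ A : Finset (Fin n), A.Nonempty ∧ Aᶜ.Nonempty ∧
      (∀ B : Finset (Fin n), B.Nonempty → Bᶜ.Nonempty → cost A ≤ cost B) ∧
      (∃ j : Fin n, A = Finset.univ.filter (fun i => i ≤ j)) := by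
  classical
  intro mean cost
  set S : Finset (Fin n) → ℝ := fun A => ∑ i ∈ A, x i with hSdef
  set Q : ℝ := ∑ i, (x i)^2 with hQdef
  set T : ℝ := ∑ i, x i with hTdef
  -- cost formula
  have hsum_compl : ∀ C : Finset (Fin n), S Cᶜ = T - S C := by
    intro C
    have := Finset.sum_add_sum_compl C x
    simp only [hSdef, hTdef]; linarith
  have hcard_compl : ∀ C : Finset (Fin n), Cᶜ.card = n - C.card := by
    intro C; rw [Finset.card_compl, Fintype.card_fin]
  have hcost : ∀ C : Finset (Fin n), C.Nonempty → Cᶜ.Nonempty →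
      cost C = Q - (S C^2 / C.card + S Cᶜ^2 / Cᶜ.card) := by
    intro C h1 h2
    have w1 := wcss x C h1
    have w2 := wcss x Cᶜ h2
    have hsplit : (∑ i ∈ C, (x i)^2) + (∑ i ∈ Cᶜ, (x i)^2) = Q :=
      Finset.sum_add_sum_compl C _
    simp only [cost, mean, hSdef] at *
    rw [w1, w2]
    linarith
  have hsym : ∀ C : Finset (Fin n), C.Nonempty → Cᶜ.Nonempty → cost Cᶜ = cost C := by
    intro C h1 h2
    rw [hcost Cᶜ h2 (by simpa using h1), hcost C h1 h2, compl_compl]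
    ring
  -- candidate prefixes
  have hIic_filter : ∀ j : Fin n, Finset.Iic j = Finset.univ.filter (fun i => i ≤ j) := by
    intro j; ext i; simp
  have hIicne : ∀ j : Fin n, (Finset.Iic j).Nonempty :=
    fun j => ⟨j, Finset.mem_Iic.mpr le_rfl⟩
  have hIicCne : ∀ j : Fin n, (j : ℕ) + 1 < n → (Finset.Iic j)ᶜ.Nonempty := by
    intro j hj
    refine ⟨⟨(j : ℕ) + 1, by omega⟩, ?_⟩
    simp [Finset.mem_compl, Finset.mem_Iic, Fin.le_def]
  set J : Finset (Fin n) := Finset.univ.filter (fun j => (j : ℕ) + 1 < n) with hJdef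
  have hJne : J.Nonempty := ⟨⟨0, by omega⟩, by simp [hJdef]; omega⟩
  obtain ⟨j0, hj0J, hj0min⟩ := J.exists_min_image (fun j => cost (Finset.Iic j)) hJne
  have hj0lt : (j0 : ℕ) + 1 < n := by simpa [hJdef] using hj0J
  refine ⟨Finset.Iic j0, hIicne j0, hIicCne j0 hj0lt, ?_, ⟨j0, hIic_filter j0⟩⟩
  intro B hBne hBCne
  -- cardinalities
  set k : ℕ := B.card with hkdef
  have hk1 : 1 ≤ k := Finset.card_pos.mpr hBne
  have hkn : k < n := by
    have h1 : Bᶜ.card = n - k := hcard_compl B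
    have h2 : 1 ≤ Bᶜ.card := Finset.card_pos.mpr hBCne
    have h3 : k ≤ n := by simpa [hkdef] using (Finset.card_le_univ B).trans_eq (by simp)
    omega
  -- the two candidate prefixes
  set j1 : Fin n := ⟨k - 1, by omega⟩ with hj1def
  set j2 : Fin n := ⟨n - k - 1, by omega⟩ with hj2def
  have hj1J : j1 ∈ J := by simp [hJdef, hj1def]; omega
  have hj2J : j2 ∈ J := by simp [hJdef, hj2def]; omega
  have hcard1 : (Finset.Iic j1).card = k := by
    rw [Fin.card_Iic]; simp [hj1def]; omega
  have hcard2 : (Finset.Iic j2).card = n - k := by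
    rw [Fin.card_Iic]; simp [hj2def]; omega
  -- sum bounds
  have ha : S (Finset.Iic j1) ≤ S B := prefix_min x hsorted j1 B (by rw [hcard1])
  have hb' : S (Finset.Iic j2) ≤ S Bᶜ :=
    prefix_min x hsorted j2 Bᶜ (by rw [hcard2, hcard_compl])
  set a : ℝ := S (Finset.Iic j1) with hadef
  set b : ℝ := T - S (Finset.Iic j2) with hbdef
  have hsb : S B ≤ b := by
    have := hsum_compl B; rw [hbdef]; linarith
  -- real cardinalities
  have hkpos : (0 : ℝ) < (k : ℝ) := by exact_mod_cast hk1
  have hmpos : (0 : ℝ) < (n - k : ℕ) := by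
    have : 1 ≤ n - k := by omega
    exact_mod_cast this
  -- cost identities
  have hcostB : cost B = Q - (S B^2 / k + (T - S B)^2 / (n - k : ℕ)) := by
    rw [hcost B hBne hBCne, hsum_compl B, hcard_compl B, hkdef]
  have hcost1 : cost (Finset.Iic j1) = Q - (a^2 / k + (T - a)^2 / (n - k : ℕ)) := by
    rw [hcost _ (hIicne j1) (hIicCne j1 (by simpa [hJdef] using hj1J)),
      hsum_compl, hcard_compl, hcard1, hadef]
  have hcost2 : cost (Finset.Iic j2) = Q - (b^2 / k + (T - b)^2 / (n - k : ℕ)) := by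
    have h2c : (Finset.Iic j2)ᶜ.Nonempty := hIicCne j2 (by simpa [hJdef] using hj2J)
    have hkc : ((Finset.Iic j2)ᶜ).card = k := by
      rw [hcard_compl, hcard2]; omega
    rw [← hsym _ (hIicne j2) h2c,
      hcost _ h2c (by simp), compl_compl, hsum_compl, hkc, hcard2, hbdef]
    ring
  clear_value mean cost S Q T a b
  -- convexity
  have hmax := quad_max (k : ℝ) ((n - k : ℕ) : ℝ) T a b (S B) hkpos hmpos ha hsb
  have hA1 := hj0min j1 hj1J
  have hA2 := hj0min j2 hj2J
  rcases max_cases (a^2 / (k:ℝ) + (T - a)^2 / ((n - k : ℕ):ℝ))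
      (b^2 / (k:ℝ) + (T - b)^2 / ((n - k : ℕ):ℝ)) with ⟨hmx, _⟩ | ⟨hmx, _⟩
  · rw [hmx] at hmax; linarith [hcostB, hcost1, hA1]
  · rw [hmx] at hmax; linarith [hcostB, hcost2, hA2]
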